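/- Let xs < xt be integers, C ≥ 0 a real number, and f : ℤ → ℝ a function satisfying the Ameso(C) condition on [xs,xt]. Suppose there exist x0 ∈ [xs,xt] and positive integers b1, b2 with xs ≤ x0 − b2 and x0 + b1 ≤ xt such that (a) f(x0) = min over y ∈ [x0−b2, x0+b1] of f(y), (b) f(x0) + C ≤ max over y ∈ [x0, x0+b1] of f(y), and (c) f(x0) + C ≤ max over y ∈ [x0−b2, x0] of f(y). Then f(x0) = min over y ∈ [xs, xt] of f(y). -/

import Mathlib

/-- Ceiling of `(x+y)/2` as a rational. -/
def mceil (x y : ℤ) : ℤ := ⌈((x : ℚ) + (y : ℚ)) / 2⌉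

/-- Floor of `(x+y)/2` as a rational. -/
def mfloor (x y : ℤ) : ℤ := ⌊((x : ℚ) + (y : ℚ)) / 2⌋

/-!
If some point right of `x0` lay below `f x0`, let `x'` be the first one; it lies beyond the
window `[x0 - b2, x0 + b1]`. The rightmost maximiser `M` of `f` on `[x0, x')` lies right of `x0`
and has `f x0 + C ≤ f M`. If `M` is past the midpoint of `[x0, x']`, the Ameso inequality for
`x'` and its mirror image in `M` forces `f x' ≥ f x0`; otherwise the Ameso inequality for `x0`
and its mirror image `2M - x0` makes that point a maximiser right of `M`. The left side is the
mirror image.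
-/

lemma mceil_of_add_eq_two_mul {x y m : ℤ} (h : x + y = 2 * m) : mceil x y = m := by
  rw [mceil, show ((x : ℚ) + y) / 2 = m by rw [← Int.cast_add, h]; push_cast; ring,
    Int.ceil_intCast]

lemma mfloor_of_add_eq_two_mul {x y m : ℤ} (h : x + y = 2 * m) : mfloor x y = m := by
  rw [mfloor, show ((x : ℚ) + y) / 2 = m by rw [← Int.cast_add, h]; push_cast; ring,
    Int.floor_intCast]

lemma mceil_neg_neg (x y : ℤ) : mceil (-x) (-y) = -mfloor x y := by
  rw [mceil, mfloor, ← Int.ceil_neg]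
  push_cast
  ring_nf

lemma mfloor_neg_neg (x y : ℤ) : mfloor (-x) (-y) = -mceil x y := by
  rw [mfloor, mceil, ← Int.floor_neg]
  push_cast
  ring_nf

lemma Finset.exists_rightmost_max_image {α β : Type*} [LinearOrder α] [LinearOrder β]
    (s : Finset α) (hs : s.Nonempty) (f : α → β) :
    ∃ M ∈ s, (∀ z ∈ s, f z ≤ f M) ∧ ∀ z ∈ s, f M ≤ f z → z ≤ M := by
  obtain ⟨m, hm, hmax⟩ := s.exists_max_image f hs
  obtain ⟨M, hM, hMmax⟩ := (s.filter (f m ≤ f ·)).exists_max_image id ⟨m, by simp [hm]⟩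
  rw [mem_filter] at hM
  refine ⟨M, hM.1, fun z hz => (hmax z hz).trans hM.2, fun z hz hMz => ?_⟩
  exact hMmax z (mem_filter.2 ⟨hz, hM.2.trans hMz⟩)

def AmesoOn (f : ℤ → ℝ) (C : ℝ) (a b : ℤ) : Prop :=
  ∀ x ∈ Finset.Icc a b, ∀ y ∈ Finset.Icc a b,
    f x + f y + C ≥ f (mceil x y) + f (mfloor x y)

namespace AmesoOn

variable {f : ℤ → ℝ} {C : ℝ} {a b : ℤ}

lemma mono (hf : AmesoOn f C a b) {c d : ℤ} (hac : a ≤ c) (hdb : d ≤ b) : AmesoOn f C c d :=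
  fun x hx y hy => hf x (Finset.Icc_subset_Icc hac hdb hx) y (Finset.Icc_subset_Icc hac hdb hy)

lemma comp_neg (hf : AmesoOn f C a b) : AmesoOn (fun z => f (-z)) C (-b) (-a) := by
  intro x hx y hy
  rw [Finset.mem_Icc] at hx hy
  have h := hf (-x) (Finset.mem_Icc.2 ⟨by omega, by omega⟩) (-y)
    (Finset.mem_Icc.2 ⟨by omega, by omega⟩)
  rw [mceil_neg_neg, mfloor_neg_neg] at h
  dsimp only
  linarith

lemma two_mul_le {x y m : ℤ} (hf : AmesoOn f C a b) (hx : x ∈ Finset.Icc a b)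
    (hy : y ∈ Finset.Icc a b) (hm : x + y = 2 * m) : 2 * f m ≤ f x + f y + C := by
  have h := hf x hx y hy
  rw [mceil_of_add_eq_two_mul hm, mfloor_of_add_eq_two_mul hm] at h
  linarith

lemma lt_add_of_first_drop {x0 x' : ℤ} (hf : AmesoOn f C x0 x') (hx : x0 + 2 ≤ x')
    (hlow : ∀ z ∈ Finset.Ico x0 x', f x0 ≤ f z) (hdrop : f x' < f x0) :
    ∀ u ∈ Finset.Ico x0 x', f u < f x0 + C := by
  have mem_Icc {z : ℤ} (h₁ : x0 ≤ z) (h₂ : z ≤ x') : z ∈ Finset.Icc x0 x' :=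
    Finset.mem_Icc.2 ⟨h₁, h₂⟩
  have mem_Ico {z : ℤ} (h₁ : x0 ≤ z) (h₂ : z < x') : z ∈ Finset.Ico x0 x' :=
    Finset.mem_Ico.2 ⟨h₁, h₂⟩
  intro u hu
  by_contra! huC
  obtain ⟨M, hM, hMmax, hMright⟩ :=
    (Finset.Ico x0 x').exists_rightmost_max_image (Finset.nonempty_Ico.2 (by omega)) f
  rw [Finset.mem_Ico] at hM
  have hMC : f x0 + C ≤ f M := huC.trans (hMmax u hu)
  have hx0M : x0 < M := by
    by_contra hle
    have hMx0 : M = x0 := by omega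
    have := hMright (x0 + 1) (mem_Ico (by omega) (by omega))
      (hMx0 ▸ hlow (x0 + 1) (mem_Ico (by omega) (by omega)))
    omega
  rcases le_or_gt (x0 + x') (2 * M) with hpast | hbefore
  · have hmid := hf.two_mul_le (x := 2 * M - x') (y := x') (m := M)
      (mem_Icc (by omega) (by omega)) (mem_Icc (by omega) le_rfl) (by ring)
    have := hMmax (2 * M - x') (mem_Ico (by omega) (by omega))
    linarith
  · have hmid := hf.two_mul_le (x := x0) (y := 2 * M - x0) (m := M)
      (mem_Icc le_rfl (by omega)) (mem_Icc (by omega) (by omega)) (by ring)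
    have := hMright (2 * M - x0) (mem_Ico (by omega) (by omega)) (by linarith)
    omega

lemma le_right_of_local_min {x0 xt b u : ℤ} (hf : AmesoOn f C x0 xt) (hb : 0 < b)
    (hloc : ∀ z ∈ Finset.Icc x0 (x0 + b), f x0 ≤ f z) (hu : u ∈ Finset.Icc x0 (x0 + b))
    (huC : f x0 + C ≤ f u) : ∀ z ∈ Finset.Icc x0 xt, f x0 ≤ f z := by
  intro z hz
  by_contra! hzlt
  let S := (Finset.Icc x0 xt).filter (f · < f x0)
  obtain ⟨x', hx'S, hx'min⟩ := S.exists_min_image id ⟨z, Finset.mem_filter.2 ⟨hz, hzlt⟩⟩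
  obtain ⟨hx', hdrop⟩ := Finset.mem_filter.1 hx'S
  rw [Finset.mem_Icc] at hx' hu
  have hlow : ∀ w ∈ Finset.Ico x0 x', f x0 ≤ f w := by
    intro w hw
    rw [Finset.mem_Ico] at hw
    by_contra! hwlt
    have := hx'min w (Finset.mem_filter.2 ⟨Finset.mem_Icc.2 ⟨hw.1, by omega⟩, hwlt⟩)
    exact absurd this (not_le.2 hw.2)
  have hfar : x0 + b < x' := by
    by_contra! hle
    exact absurd (hloc x' (Finset.mem_Icc.2 ⟨hx'.1, hle⟩)) (not_le.2 hdrop)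
  have := (hf.mono le_rfl hx'.2).lt_add_of_first_drop (by omega) hlow hdrop u
    (Finset.mem_Ico.2 ⟨hu.1, by omega⟩)
  linarith

lemma le_left_of_local_min {xs x0 b u : ℤ} (hf : AmesoOn f C xs x0) (hb : 0 < b)
    (hloc : ∀ z ∈ Finset.Icc (x0 - b) x0, f x0 ≤ f z) (hu : u ∈ Finset.Icc (x0 - b) x0)
    (huC : f x0 + C ≤ f u) : ∀ z ∈ Finset.Icc xs x0, f x0 ≤ f z := by
  have mem_neg {z c d : ℤ} (h : z ∈ Finset.Icc c d) : -z ∈ Finset.Icc (-d) (-c) := by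
    rw [Finset.mem_Icc] at h ⊢
    omega
  have hright := hf.comp_neg.le_right_of_local_min (x0 := -x0) hb
    (fun z hz => by simpa using hloc (-z) (by simpa [sub_eq_add_neg, add_comm] using mem_neg hz))
    (u := -u) (by simpa [sub_eq_add_neg, add_comm] using mem_neg hu) (by simpa using huC)
  intro z hz
  simpa using hright (-z) (mem_neg hz)

end AmesoOn

/-- Theorem 3 (local minimum with two-sided conditions is the global minimum). -/
theorem ameso_global_optimizer_two_sided
    (xs xt : ℤ) (C : ℝ) (f : ℤ → ℝ)
    (hAmeso : ∀ x ∈ Finset.Icc xs xt, ∀ y ∈ Finset.Icc xs xt,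
      f x + f y + C ≥ f (mceil x y) + f (mfloor x y))
    (x0 : ℤ) (hx0l : xs ≤ x0) (hx0r : x0 ≤ xt)
    (b1 b2 : ℤ) (hb1 : 0 < b1) (hb2 : 0 < b2)
    (hmin : f x0 = (Finset.Icc (x0 - b2) (x0 + b1)).inf' (Finset.nonempty_Icc.2 (by omega)) f)
    (hmaxr : f x0 + C ≤ (Finset.Icc x0 (x0 + b1)).sup' (Finset.nonempty_Icc.2 (by omega)) f)
    (hmaxl : f x0 + C ≤ (Finset.Icc (x0 - b2) x0).sup' (Finset.nonempty_Icc.2 (by omega)) f) :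
    f x0 = (Finset.Icc xs xt).inf' (Finset.nonempty_Icc.2 (by omega)) f := by
  have hf : AmesoOn f C xs xt := hAmeso
  have hloc := (Finset.le_inf'_iff _ _).1 hmin.le
  obtain ⟨ur, hur, hurC⟩ := (Finset.le_sup'_iff _).1 hmaxr
  obtain ⟨ul, hul, hulC⟩ := (Finset.le_sup'_iff _).1 hmaxl
  have hright := (hf.mono hx0l le_rfl).le_right_of_local_min hb1
    (fun z hz => hloc z (Finset.Icc_subset_Icc (by omega) le_rfl hz)) hur hurC
  have hleft := (hf.mono le_rfl hx0r).le_left_of_local_min hb2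
    (fun z hz => hloc z (Finset.Icc_subset_Icc le_rfl (by omega) hz)) hul hulC
  refine le_antisymm (Finset.le_inf' _ _ fun z hz => ?_)
    (Finset.inf'_le f (Finset.mem_Icc.2 ⟨hx0l, hx0r⟩))
  rw [Finset.mem_Icc] at hz
  rcases le_total x0 z with h | h
  · exact hright z (Finset.mem_Icc.2 ⟨h, hz.2⟩)
  · exact hleft z (Finset.mem_Icc.2 ⟨hz.1, h⟩)
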